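/- The error of the convergent 60499999499/490050000000 of C₁₀ (the convergent truncated immediately before the high water mark of HWM number 5) satisfies 9·10^(−190) < 60499999499/490050000000 − C₁₀ < 9.2·10^(−190); in particular the error is approximately 9.1·10^(−190) and the convergent exceeds C₁₀. -/

import Mathlib

/-!
If every integer from 10 on had two digits, the series would become
`∑_{m ≤ 9} m / 10^m + ∑_{m ≥ 10} m / 10^(2m - 9)`, an arithmetico-geometric series whose sum is
exactly `60499999499 / 490050000000`. The two series agree up to `m = 99`, and from `m = 100` on
the true terms are smaller, so the error is the positive series
`∑_{m ≥ 100} m (10^(9 - 2m) - 10^(-pos m))`. Its first term `100 (10^-191 - 10^-192)` is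
`9 * 10^-190`, and the whole series is at most `∑_{m ≥ 100} m 10^(9 - 2m) - 100 * 10^-192`,
which is about `9.1 * 10^-190`.
-/

/-- `pos n` is the position in the decimal expansion of Champernowne's constant
of the last digit of the integer `n`. -/
def pos (n : ℕ) : ℕ := ∑ k ∈ Finset.Icc 1 n, (Nat.digits 10 k).length

/-- Champernowne's constant in base ten. -/
noncomputable def C₁₀ : ℝ := ∑' n : ℕ, ((n + 1 : ℕ) : ℝ) / 10 ^ pos (n + 1)

lemma pos_succ (n : ℕ) : pos (n + 1) = pos n + (Nat.digits 10 (n + 1)).length := by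
  rw [pos, pos, Finset.sum_Icc_succ_top (by omega)]

/-- The value of `pos m` if every integer from `10` on had exactly two digits. -/
def twoDigitPos (m : ℕ) : ℕ := max m (2 * m - 9)

lemma twoDigitPos_le_pos (n : ℕ) : twoDigitPos n ≤ pos n := by
  induction n with
  | zero => simp [twoDigitPos, pos]
  | succ n ih =>
    have hlen₁ : 0 < (Nat.digits 10 (n + 1)).length :=
      (Nat.lt_digits_length_iff (by norm_num) _).2 (by simp)
    have hlen₂ : 10 ≤ n + 1 → 1 < (Nat.digits 10 (n + 1)).length := fun h =>
      (Nat.lt_digits_length_iff (by norm_num) _).2 (by simpa using h)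
    rw [pos_succ]
    simp only [twoDigitPos] at ih ⊢
    omega

lemma pos_le_twoDigitPos {n : ℕ} (hn : n ≤ 99) : pos n ≤ twoDigitPos n := by
  induction n with
  | zero => simp [twoDigitPos, pos]
  | succ n ih =>
    have hlen₁ : n + 1 < 10 → (Nat.digits 10 (n + 1)).length ≤ 1 := fun h =>
      (Nat.digits_length_le_iff (by norm_num) _).2 (by simpa using h)
    have hlen₂ : (Nat.digits 10 (n + 1)).length ≤ 2 :=
      (Nat.digits_length_le_iff (by norm_num) _).2 (by norm_num; omega)
    have := ih (by omega)
    rw [pos_succ]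
    simp only [twoDigitPos] at this ⊢
    omega

lemma pos_eq_twoDigitPos {n : ℕ} (hn : n ≤ 99) : pos n = twoDigitPos n :=
  le_antisymm (pos_le_twoDigitPos hn) (twoDigitPos_le_pos n)

lemma pos_hundred : pos 100 = 192 := by
  rw [pos_succ, pos_eq_twoDigitPos le_rfl]
  simp [twoDigitPos]

lemma pos_hundred_one : pos 101 = 195 := by
  rw [pos_succ, pos_hundred]
  simp

/-- Indexed as in `C₁₀`: `champTerm p n` is the term of the integer `n + 1`. -/
noncomputable def champTerm (p : ℕ → ℕ) (n : ℕ) : ℝ := ((n + 1 : ℕ) : ℝ) / 10 ^ p (n + 1)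

lemma champTerm_nonneg (p : ℕ → ℕ) (n : ℕ) : 0 ≤ champTerm p n := by
  unfold champTerm
  positivity

lemma champTerm_le_champTerm {p q : ℕ → ℕ} {n : ℕ} (h : p (n + 1) ≤ q (n + 1)) :
    champTerm q n ≤ champTerm p n :=
  div_le_div_of_nonneg_left (by positivity) (by positivity) (pow_le_pow_right₀ (by norm_num) h)

lemma hasSum_add_mul_geometric {𝕜 : Type*} [NormedField 𝕜] {r : 𝕜} (hr : ‖r‖ < 1) (c : 𝕜) :
    HasSum (fun k : ℕ => ((k : 𝕜) + c) * r ^ k) (r / (1 - r) ^ 2 + c / (1 - r)) := by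
  have h := (hasSum_coe_mul_geometric_of_norm_lt_one hr).add
    ((hasSum_geometric_of_norm_lt_one hr).mul_left c)
  simpa only [add_mul, div_eq_mul_inv] using h

lemma hasSum_champTerm_twoDigitPos_nat_add {N : ℕ} (hN : 9 ≤ N) :
    HasSum (fun k => champTerm twoDigitPos (k + N))
      ((1 / 100 / (1 - 1 / 100) ^ 2 + ((N : ℝ) + 1) / (1 - 1 / 100)) / 10 ^ (2 * N - 7)) := by
  have hterm : (fun k => champTerm twoDigitPos (k + N)) =
      fun k : ℕ => ((k : ℝ) + (N + 1)) * (1 / 100) ^ k / 10 ^ (2 * N - 7) := by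
    funext k
    have hexp : twoDigitPos (k + N + 1) = 2 * k + (2 * N - 7) := by
      simp only [twoDigitPos]
      omega
    rw [champTerm, hexp, pow_add, pow_mul, one_div_pow]
    push_cast
    field_simp
    norm_num
    ring
  rw [hterm]
  exact (hasSum_add_mul_geometric (by norm_num [abs_of_pos]) _).div_const _

lemma summable_champTerm_twoDigitPos : Summable (champTerm twoDigitPos) :=
  (summable_nat_add_iff 9).1 (hasSum_champTerm_twoDigitPos_nat_add le_rfl).summable

lemma summable_champTerm_pos : Summable (champTerm pos) :=
  summable_champTerm_twoDigitPos.of_nonneg_of_le (champTerm_nonneg pos)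
    fun _ => champTerm_le_champTerm (twoDigitPos_le_pos _)

lemma tsum_champTerm_twoDigitPos :
    ∑' n, champTerm twoDigitPos n = 60499999499 / 490050000000 := by
  rw [← summable_champTerm_twoDigitPos.sum_add_tsum_nat_add 9,
    (hasSum_champTerm_twoDigitPos_nat_add le_rfl).tsum_eq]
  norm_num [Finset.sum_range_succ, champTerm, twoDigitPos]

lemma tsum_champTerm_twoDigitPos_sub_C₁₀ :
    ∑' n, champTerm twoDigitPos n - C₁₀ =
      ∑' k, (champTerm twoDigitPos (k + 99) - champTerm pos (k + 99)) := by
  have hhead : ∀ n ∈ Finset.range 99, champTerm twoDigitPos n - champTerm pos n = 0 := by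
    intro n hn
    rw [champTerm, champTerm, pos_eq_twoDigitPos (by simp at hn; omega), sub_self]
  change _ - ∑' n, champTerm pos n = _
  rw [← summable_champTerm_twoDigitPos.tsum_sub summable_champTerm_pos,
    ← (summable_champTerm_twoDigitPos.sub summable_champTerm_pos).sum_add_tsum_nat_add 99,
    Finset.sum_eq_zero hhead, zero_add]

lemma lt_tsum_champTerm_twoDigitPos_sub_pos :
    9 * (10 : ℝ) ^ (-190 : ℤ) <
      ∑' k, (champTerm twoDigitPos (k + 99) - champTerm pos (k + 99)) := by
  have hsum := (summable_nat_add_iff 99).2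
    (summable_champTerm_twoDigitPos.sub summable_champTerm_pos)
  calc 9 * (10 : ℝ) ^ (-190 : ℤ)
      < ∑ k ∈ Finset.range 2, (champTerm twoDigitPos (k + 99) - champTerm pos (k + 99)) := by
        norm_num [Finset.sum_range_succ, champTerm, twoDigitPos, pos_hundred, pos_hundred_one]
    _ ≤ _ := hsum.sum_le_tsum _ fun _ _ =>
        sub_nonneg.2 (champTerm_le_champTerm (twoDigitPos_le_pos _))

lemma tsum_champTerm_twoDigitPos_sub_pos_lt :
    ∑' k, (champTerm twoDigitPos (k + 99) - champTerm pos (k + 99)) <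
      9.2 * (10 : ℝ) ^ (-190 : ℤ) := by
  have hpos := (summable_nat_add_iff 99).2 summable_champTerm_pos
  have hfirst : champTerm pos 99 ≤ ∑' k, champTerm pos (k + 99) :=
    hpos.le_tsum 0 fun _ _ => champTerm_nonneg pos _
  rw [((summable_nat_add_iff 99).2 summable_champTerm_twoDigitPos).tsum_sub hpos,
    (hasSum_champTerm_twoDigitPos_nat_add (by norm_num)).tsum_eq]
  rw [champTerm, pos_hundred] at hfirst
  norm_num at hfirst ⊢
  linarith

theorem hwm5_convergent_error :
    9 * (10 : ℝ) ^ (-190 : ℤ) < 60499999499 / 490050000000 - C₁₀ ∧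
    60499999499 / 490050000000 - C₁₀ < 9.2 * (10 : ℝ) ^ (-190 : ℤ) := by
  rw [← tsum_champTerm_twoDigitPos, tsum_champTerm_twoDigitPos_sub_C₁₀]
  exact ⟨lt_tsum_champTerm_twoDigitPos_sub_pos, tsum_champTerm_twoDigitPos_sub_pos_lt⟩
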